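/- arXiv:1303.5994 — 2 statements merged into one kernel-verified Lean document; each statement's English description precedes it below -/
import Mathlib

section
/- For every k ≥ 3, if x ∈ R^k then ∂_i^R(x) ∈ R^{k−1} for every i = 1,…,N. -/
open scoped BigOperators TensorProduct

/-- The tensor algebra `T(V)` of a vector space `V` with basis `v_0, …, v_{N-1}`:
its basis is the set of words in the letters `v_i`, and multiplication is concatenation. -/
abbrev TV (K : Type*) [Field K] (N : ℕ) : Type _ := MonoidAlgebra K (FreeMonoid (Fin N))

section Ops

variable (K : Type*) [Field K] {N : ℕ}

/-- Swap the letters at (0-based) positions `k-1` and `k` of a list. -/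
def swapList {α : Type*} (l : List α) (k : ℕ) : List α :=
  match l[k-1]?, l[k]? with
  | some a, some b => (l.set (k - 1) b).set k a
  | _, _ => l

/-- The braiding coefficient `q_{ab}` for the letters at positions `k-1`, `k`. -/
def coefAt (q : Fin N → Fin N → K) (l : List (Fin N)) (k : ℕ) : K :=
  match l[k-1]?, l[k]? with
  | some a, some b => q a b
  | _, _ => 1

/-- The action of the braid-group generator `σ_k` (paper indexing) on tensor powers of `V`:
on a word `w` of length `n` with `1 ≤ k ≤ n-1` it swaps the letters at positions `k`, `k+1`
(1-based) and multiplies by the braiding coefficient. -/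
noncomputable def sigOp (q : Fin N → Fin N → K) (k : ℕ) : TV K N →ₗ[K] TV K N :=
  (MonoidAlgebra.coeffLinearEquiv K).symm.toLinearMap ∘ₗ Finsupp.lsum K (fun w =>
    if 1 ≤ k ∧ k < (FreeMonoid.toList w).length then
      Finsupp.lsingle (FreeMonoid.ofList (swapList (FreeMonoid.toList w) k)) ∘ₗ
        LinearMap.lsmul K K (coefAt K q (FreeMonoid.toList w) k)
    else Finsupp.lsingle w) ∘ₗ (MonoidAlgebra.coeffLinearEquiv K).toLinearMap

/-- The operator attached to a word `σ_{i₁}σ_{i₂}⋯σ_{i_r}` in the braid generators. -/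
noncomputable def wordOp (q : Fin N → Fin N → K) (l : List ℕ) : Module.End K (TV K N) :=
  (l.map (sigOp K q)).prod

/-- The right differential element `T_n = 1 + σ_{n−1} + σ_{n−1}σ_{n−2} + ⋯ + σ_{n−1}⋯σ_1`
acting on `V^{⊗n}`. -/
noncomputable def TOp (q : Fin N → Fin N → K) (n : ℕ) : Module.End K (TV K N) :=
  ∑ j ∈ Finset.range n, wordOp K q ((List.range' (n - j) j).reverse)

/-- The left differential element `U_n = 1 + σ_1 + σ_1σ_2 + ⋯ + σ_1σ_2⋯σ_{n−1}`
acting on `V^{⊗n}`. -/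
noncomputable def UOp (q : Fin N → Fin N → K) (n : ℕ) : Module.End K (TV K N) :=
  ∑ j ∈ Finset.range n, wordOp K q (List.range' 1 j)

/-- The right Dynkin element `P_n = (1 − σ_{n−1}⋯σ_1)(1 − σ_{n−1}⋯σ_2)⋯(1 − σ_{n−1})`. -/
noncomputable def POp (q : Fin N → Fin N → K) (n : ℕ) : Module.End K (TV K N) :=
  ((List.range' 1 (n - 1)).map (fun j =>
    1 - wordOp K q ((List.range' j (n - j)).reverse))).prod

/-- The left Dynkin element `Q_n = (1 − σ_1⋯σ_{n−1})(1 − σ_1⋯σ_{n−2})⋯(1 − σ_1)`. -/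
noncomputable def QOp (q : Fin N → Fin N → K) (n : ℕ) : Module.End K (TV K N) :=
  (((List.range' 1 (n - 1)).reverse).map (fun m =>
    1 - wordOp K q (List.range' 1 m))).prod

/-- `T_n' = (1 − σ_{n−1}²σ_{n−2}⋯σ_1)(1 − σ_{n−1}²σ_{n−2}⋯σ_2)⋯(1 − σ_{n−1}²)`. -/
noncomputable def TpOp (q : Fin N → Fin N → K) (n : ℕ) : Module.End K (TV K N) :=
  ((List.range' 1 (n - 1)).map (fun j =>
    1 - wordOp K q ((n - 1) :: (List.range' j (n - j)).reverse))).prod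

/-- `U_n' = (1 − σ_1²σ_2⋯σ_{n−1})(1 − σ_1²σ_2⋯σ_{n−2})⋯(1 − σ_1²)`, viewed inside the
operators on `V^{⊗m}` for any `m ≥ n` (standard inclusion `σ_i ↦ σ_i`). -/
noncomputable def UpOp (q : Fin N → Fin N → K) (n : ℕ) : Module.End K (TV K N) :=
  (((List.range' 1 (n - 1)).reverse).map (fun m =>
    1 - wordOp K q (1 :: List.range' 1 m))).prod

/-- `X_{m,n} = (1 − σ_{n−1}²σ_{n−2}⋯σ_{n−m})⋯(1 − σ_{n−1}²σ_{n−2})(1 − σ_{n−1}²)`;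
one has `X_{n-1,n} = T_n'` and `X_{n-2,n} = ι_{n-1}^n(T_{n-1}')`. -/
noncomputable def XOp (q : Fin N → Fin N → K) (n m : ℕ) : Module.End K (TV K N) :=
  ((List.range' (n - m) m).map (fun j =>
    1 - wordOp K q ((n - 1) :: (List.range' j (n - j)).reverse))).prod

/-- The list of generator indices of the Garside element
`Δ_n = (σ_1⋯σ_{n−1})(σ_1⋯σ_{n−2})⋯(σ_1σ_2)σ_1`. -/
def deltaList (n : ℕ) : List ℕ :=
  (((List.range (n - 1)).reverse).map (fun j => List.range' 1 (j + 1))).flatten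

/-- The Garside element `Δ_n` acting on `V^{⊗n}`. -/
noncomputable def deltaOp (q : Fin N → Fin N → K) (n : ℕ) : Module.End K (TV K N) :=
  wordOp K q (deltaList n)

/-- The central element `θ_n = Δ_n²` acting on `V^{⊗n}`. -/
noncomputable def thetaOp (q : Fin N → Fin N → K) (n : ℕ) : Module.End K (TV K N) :=
  deltaOp K q n ^ 2

/-- The degree-`n` component `V^{⊗n}` of the tensor algebra. -/
noncomputable def deg (N n : ℕ) : Submodule K (TV K N) :=
  MonoidAlgebra.supported K K {w : FreeMonoid (Fin N) | (FreeMonoid.toList w).length = n}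

/-- The right differential operator `∂_i^R`: on a monomial `v_{f₁}⋯v_{f_n}` it is
`Σ_{k : f_k = i} (∏_{l>k} q_{i f_l}) · v_{f₁}⋯v̂_{f_k}⋯v_{f_n}`. -/
noncomputable def rdiff (q : Fin N → Fin N → K) (i : Fin N) : TV K N →ₗ[K] TV K N :=
  (MonoidAlgebra.coeffLinearEquiv K).symm.toLinearMap ∘ₗ Finsupp.lsum K (fun w =>
    ∑ k ∈ Finset.range (FreeMonoid.toList w).length,
      if (FreeMonoid.toList w)[k]? = some i then
        Finsupp.lsingle (FreeMonoid.ofList ((FreeMonoid.toList w).eraseIdx k)) ∘ₗ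
          LinearMap.lsmul K K
            ((((FreeMonoid.toList w).drop (k + 1)).map (fun a => q i a)).prod)
      else 0) ∘ₗ (MonoidAlgebra.coeffLinearEquiv K).toLinearMap

/-- The left differential operator `∂_i^L`: on a monomial `v_{f₁}⋯v_{f_n}` it is
`Σ_{k : f_k = i} (∏_{l<k} q_{f_l i}) · v_{f₁}⋯v̂_{f_k}⋯v_{f_n}`. -/
noncomputable def ldiff (q : Fin N → Fin N → K) (i : Fin N) : TV K N →ₗ[K] TV K N :=
  (MonoidAlgebra.coeffLinearEquiv K).symm.toLinearMap ∘ₗ Finsupp.lsum K (fun w =>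
    ∑ k ∈ Finset.range (FreeMonoid.toList w).length,
      if (FreeMonoid.toList w)[k]? = some i then
        Finsupp.lsingle (FreeMonoid.ofList ((FreeMonoid.toList w).eraseIdx k)) ∘ₗ
          LinearMap.lsmul K K
            ((((FreeMonoid.toList w).take k).map (fun a => q a i)).prod)
      else 0) ∘ₗ (MonoidAlgebra.coeffLinearEquiv K).toLinearMap

end Ops

/-- The submodule of right constants of degree `n`: elements `x ∈ V^{⊗n}` with `T_n x = 0`. -/
noncomputable def ConR (K : Type*) [Field K] {N : ℕ} (q : Fin N → Fin N → K) (n : ℕ) :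
    Submodule K (TV K N) :=
  deg K N n ⊓ LinearMap.ker (TOp K q n)

/-- The submodule of left constants of degree `n`: elements `x ∈ V^{⊗n}` with `U_n x = 0`. -/
noncomputable def ConL (K : Type*) [Field K] {N : ℕ} (q : Fin N → Fin N → K) (n : ℕ) :
    Submodule K (TV K N) :=
  deg K N n ⊓ LinearMap.ker (UOp K q n)

/-- `Con_{≤m}^R`, the span of all right constants of degree between `2` and `m`. -/
noncomputable def ConRle (K : Type*) [Field K] {N : ℕ} (q : Fin N → Fin N → K) (m : ℕ) :
    Submodule K (TV K N) :=
  ⨆ n ∈ Finset.Icc 2 m, ConR K q n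

/-- `Con_{≤m}^L`, the span of all left constants of degree between `2` and `m`. -/
noncomputable def ConLle (K : Type*) [Field K] {N : ℕ} (q : Fin N → Fin N → K) (m : ℕ) :
    Submodule K (TV K N) :=
  ⨆ n ∈ Finset.Icc 2 m, ConL K q n

/-- The two-sided ideal of the tensor algebra `T(V)` generated by a set `X`,
as a `K`-submodule (the span of all elements `a * x * b` with `x ∈ X`). -/
noncomputable def idealGen (K : Type*) [Field K] {N : ℕ} (X : Set (TV K N)) : Submodule K (TV K N) :=
  Submodule.span K {y : TV K N | ∃ a b : TV K N, ∃ x ∈ X, y = a * x * b}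

/-- `R^m`: the degree-`m` component of the two-sided ideal generated by `Con_{≤m}^R`. -/
noncomputable def Rm (K : Type*) [Field K] {N : ℕ} (q : Fin N → Fin N → K) (m : ℕ) :
    Submodule K (TV K N) :=
  idealGen K (ConRle K q m : Set (TV K N)) ⊓ deg K N m

section Aux
variable {K : Type*} [Field K] {N : ℕ} (q : Fin N → Fin N → K)

/-- monomial -/
noncomputable def mw (l : List (Fin N)) : TV K N := MonoidAlgebra.single (FreeMonoid.ofList l) 1

lemma wrap_mw (g : FreeMonoid (Fin N) → K →ₗ[K] (FreeMonoid (Fin N) →₀ K)) (l : List (Fin N)) :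
    ((MonoidAlgebra.coeffLinearEquiv K).symm.toLinearMap ∘ₗ Finsupp.lsum K g ∘ₗ
      (MonoidAlgebra.coeffLinearEquiv K).toLinearMap) (mw l : TV K N) =
      (MonoidAlgebra.coeffLinearEquiv K).symm (g (FreeMonoid.ofList l) 1) := by
  show (MonoidAlgebra.coeffLinearEquiv K).symm
    (Finsupp.lsum K g (Finsupp.single (FreeMonoid.ofList l) 1)) = _
  rw [Finsupp.lsum_single]

lemma toList_ofList (l : List (Fin N)) : FreeMonoid.toList (FreeMonoid.ofList l) = l := rfl

lemma mw_mul (u v : List (Fin N)) : (mw u : TV K N) * mw v = mw (u ++ v) := by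
  unfold mw
  rw [MonoidAlgebra.single_mul_single]
  simp [mw, FreeMonoid.ofList_append]

lemma single_eq_smul_mw (w : FreeMonoid (Fin N)) (a : K) :
    (MonoidAlgebra.single w a : TV K N) = a • mw (FreeMonoid.toList w) := by
  rw [mw, MonoidAlgebra.smul_single', mul_one, FreeMonoid.ofList_toList]

lemma sigOp_mw (k : ℕ) (l : List (Fin N)) :
    sigOp K q k (mw l) = if 1 ≤ k ∧ k < l.length then
      coefAt K q l k • mw (swapList l k) else mw l := by
  rw [sigOp, wrap_mw]
  split_ifs with h h' h''
  · simp [toList_ofList, mw, MonoidAlgebra.smul_single']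
  · exact absurd h h'
  · exact absurd h'' h
  · simp [toList_ofList, mw, MonoidAlgebra.smul_single']

lemma rdiff_mw (i : Fin N) (l : List (Fin N)) :
    rdiff K q i (mw l) = ∑ k ∈ Finset.range l.length,
      if l[k]? = some i then (((l.drop (k+1)).map (fun a => q i a)).prod) • mw (l.eraseIdx k)
      else 0 := by
  rw [rdiff, wrap_mw]; simp only [LinearMap.coe_sum, Finset.sum_apply, map_sum]
  refine Finset.sum_congr rfl fun k _ => ?_
  split_ifs with h h' h''
  · simp [toList_ofList, mw, MonoidAlgebra.smul_single']
  · exact absurd h h'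
  · exact absurd h'' h
  · simp [toList_ofList, mw, MonoidAlgebra.smul_single']

lemma mem_deg_iff {n : ℕ} {x : TV K N} :
    x ∈ deg K N n ↔ ∀ w ∈ x.coeff.support, (FreeMonoid.toList w).length = n := by
  rw [deg, MonoidAlgebra.mem_supported]; exact Set.subset_def.to_iff

lemma mw_mem_deg {l : List (Fin N)} {n : ℕ} (h : l.length = n) : (mw l : TV K N) ∈ deg K N n := by
  rw [mem_deg_iff]
  intro w hw
  rw [mw, MonoidAlgebra.coeff_single] at hw
  have := Finsupp.support_single_subset hw
  simp at this
  subst this; simpa [toList_ofList]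

/-- linear maps agree on supported elements if they agree on the relevant monomials -/
lemma eq_on_supported {f g : TV K N →ₗ[K] TV K N} {s : Set (FreeMonoid (Fin N))}
    (h : ∀ w ∈ s, f (mw (FreeMonoid.toList w)) = g (mw (FreeMonoid.toList w)))
    {x : TV K N} (hx : x ∈ MonoidAlgebra.supported K K s) : f x = g x := by
  rw [MonoidAlgebra.mem_supported] at hx
  have hx2 : x = ∑ w ∈ x.coeff.support, MonoidAlgebra.single w (x.coeff w) := by
    apply MonoidAlgebra.coeff_injective
    rw [MonoidAlgebra.coeff_sum]
    simp only [MonoidAlgebra.coeff_single]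
    exact (Finsupp.sum_single x.coeff).symm
  rw [hx2, map_sum, map_sum]
  refine Finset.sum_congr rfl fun w hw => ?_
  rw [single_eq_smul_mw, map_smul, map_smul, h w (hx hw)]

lemma map_mem_supported {f : TV K N →ₗ[K] TV K N} {s : Set (FreeMonoid (Fin N))}
    {M : Submodule K (TV K N)}
    (h : ∀ w ∈ s, f (mw (FreeMonoid.toList w)) ∈ M)
    {x : TV K N} (hx : x ∈ MonoidAlgebra.supported K K s) : f x ∈ M := by
  rw [MonoidAlgebra.mem_supported] at hx
  have hx2 : x = ∑ w ∈ x.coeff.support, MonoidAlgebra.single w (x.coeff w) := by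
    apply MonoidAlgebra.coeff_injective
    rw [MonoidAlgebra.coeff_sum]
    simp only [MonoidAlgebra.coeff_single]
    exact (Finsupp.sum_single x.coeff).symm
  rw [hx2, map_sum]
  refine Submodule.sum_mem _ fun w hw => ?_
  rw [single_eq_smul_mw, map_smul]
  exact Submodule.smul_mem _ _ (h w (hx hw))

/-- The scaling operator `S_i`. -/
noncomputable def Sop (i : Fin N) : TV K N →ₗ[K] TV K N :=
  (MonoidAlgebra.coeffLinearEquiv K).symm.toLinearMap ∘ₗ Finsupp.lsum K (fun w =>
    Finsupp.lsingle w ∘ₗ LinearMap.lsmul K K (((FreeMonoid.toList w).map (fun a => q i a)).prod))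
    ∘ₗ (MonoidAlgebra.coeffLinearEquiv K).toLinearMap

lemma Sop_mw (i : Fin N) (l : List (Fin N)) :
    Sop q i (mw l) = ((l.map (fun a => q i a)).prod) • mw l := by
  rw [Sop, wrap_mw]
  simp [mw, toList_ofList, MonoidAlgebra.smul_single']

/-- The contraction operator `ε_i` (remove last letter if it equals `i`). -/
noncomputable def epsOp (i : Fin N) : TV K N →ₗ[K] TV K N :=
  (MonoidAlgebra.coeffLinearEquiv K).symm.toLinearMap ∘ₗ Finsupp.lsum K (fun w =>
    if (FreeMonoid.toList w).getLast? = some i then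
      (Finsupp.lsingle (FreeMonoid.ofList (FreeMonoid.toList w).dropLast) :
        K →ₗ[K] FreeMonoid (Fin N) →₀ K)
    else 0) ∘ₗ (MonoidAlgebra.coeffLinearEquiv K).toLinearMap

lemma epsOp_mw (i : Fin N) (l : List (Fin N)) :
    epsOp i (mw l : TV K N) = if l.getLast? = some i then mw l.dropLast else 0 := by
  rw [epsOp, wrap_mw]
  split_ifs with h h' h''
  · simp [toList_ofList, mw]
  · exact absurd h h'
  · exact absurd h'' h
  · simp [toList_ofList, mw]

lemma wordOp_concat (l1 : List ℕ) (k : ℕ) (x : TV K N) :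
    wordOp K q (l1 ++ [k]) x = wordOp K q l1 (sigOp K q k x) := by
  rw [wordOp, wordOp, List.map_append, List.prod_append]
  simp [Module.End.mul_apply]

lemma sig_cons (u v : List (Fin N)) (a b : Fin N) :
    sigOp K q (u.length + 1) (mw (u ++ a :: b :: v)) = q a b • mw (u ++ b :: a :: v) := by
  rw [sigOp_mw]
  have hc : 1 ≤ u.length + 1 ∧ u.length + 1 < (u ++ a :: b :: v).length := by
    refine ⟨by omega, ?_⟩
    simp only [List.length_append, List.length_cons]
    omega
  rw [if_pos hc]
  have h1 : (u ++ a :: b :: v)[u.length + 1 - 1]? = some a := by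
    simp only [Nat.add_sub_cancel]
    rw [List.getElem?_append_right (le_refl _)]
    simp
  have h2 : (u ++ a :: b :: v)[u.length + 1]? = some b := by
    rw [List.getElem?_append_right (by omega)]
    simp
  have hswap : swapList (u ++ a :: b :: v) (u.length + 1) = u ++ b :: a :: v := by
    rw [swapList, h1, h2]
    simp only [Nat.add_sub_cancel]
    rw [List.set_append_right _ _ (by omega), List.set_append_right _ _ (by omega)]
    simp
  rw [coefAt, h1, h2, hswap]

lemma wordOp_move (j : ℕ) (u v : List (Fin N)) (a : Fin N) (hv : v.length = j) :
    wordOp K q ((List.range' (u.length + 1) j).reverse) (mw (u ++ a :: v)) =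
      ((v.map (fun x => q a x)).prod) • (mw (u ++ v ++ [a]) : TV K N) := by
  induction j generalizing u v a with
  | zero =>
    rw [List.length_eq_zero_iff] at hv; subst hv
    simp [wordOp]
  | succ j ih =>
    match v, hv with
    | b :: v', hv =>
      have hv' : v'.length = j := by simpa using hv
      rw [List.range'_succ, List.reverse_cons, wordOp_concat, sig_cons, map_smul]
      have hre : u ++ b :: a :: v' = (u ++ [b]) ++ a :: v' := by simp
      have hlen : u.length + 1 + 1 = (u ++ [b]).length + 1 := by simp
      rw [hre, hlen, ih (u ++ [b]) v' a hv', smul_smul]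
      have hw : (u ++ [b]) ++ v' ++ [a] = u ++ (b :: v') ++ [a] := by simp
      rw [hw, List.map_cons, List.prod_cons]

lemma term_eval (u v : List (Fin N)) (a i : Fin N) :
    epsOp i (wordOp K q ((List.range' (u.length + 1) v.length).reverse) (mw (u ++ a :: v) : TV K N)) =
      if a = i then ((v.map (fun x => q i x)).prod) • mw (u ++ v) else 0 := by
  rw [wordOp_move q v.length u v a rfl, map_smul, epsOp_mw]
  rw [List.getLast?_concat, List.dropLast_concat]
  by_cases h : a = i
  · subst h; simp
  · rw [if_neg (by simpa using h), if_neg h, smul_zero]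

lemma rdiff_eq_eps (i : Fin N) (n : ℕ) (l : List (Fin N)) (hn : l.length = n) :
    rdiff K q i (mw l) = epsOp i (TOp K q n (mw l) : TV K N) := by
  rw [TOp, rdiff_mw, hn]
  rw [show ((∑ j ∈ Finset.range n, wordOp K q ((List.range' (n - j) j).reverse)) (mw l) : TV K N)
      = ∑ j ∈ Finset.range n, wordOp K q ((List.range' (n - j) j).reverse) (mw l) by
    simp [LinearMap.sum_apply]]
  rw [map_sum, ← Finset.sum_range_reflect
    (fun j => epsOp i (wordOp K q ((List.range' (n - j) j).reverse) (mw l) : TV K N)) n]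
  refine Finset.sum_congr rfl fun k hk => ?_
  rw [Finset.mem_range] at hk
  have hk' : k < l.length := by omega
  obtain ⟨u, a, v, hl, hu, hv⟩ : ∃ u a v, l = u ++ a :: v ∧ u.length = k ∧ v.length = n - 1 - k := by
    refine ⟨l.take k, l[k], l.drop (k + 1), ?_, by simp [List.length_take]; omega, by simp; omega⟩
    conv_lhs => rw [← List.take_append_drop k l, List.drop_eq_getElem_cons hk']
  have e1 : n - (n - 1 - k) = k + 1 := by omega
  rw [e1, hl, ← hu, show n - 1 - u.length = v.length by omega]
  rw [term_eval]
  have h1 : (u ++ a :: v)[u.length]? = some a := by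
    rw [List.getElem?_append_right (le_refl _)]
    simp
  have h2 : (u ++ a :: v).drop (u.length + 1) = v := by
    rw [show u ++ a :: v = (u ++ [a]) ++ v by simp,
        show u.length + 1 = (u ++ [a]).length by simp, List.drop_left]
  have h3 : (u ++ a :: v).eraseIdx u.length = u ++ v := by
    rw [List.eraseIdx_eq_take_drop_succ, List.take_left, h2]
  rw [h1, h2, h3]
  by_cases h : a = i
  · subst h; simp
  · rw [if_neg (by simpa using h), if_neg h]

lemma rdiff_mw_append (i : Fin N) (u v : List (Fin N)) :
    rdiff K q i (mw (u ++ v)) = mw u * rdiff K q i (mw v)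
      + rdiff K q i (mw u) * Sop q i (mw v) := by
  rw [rdiff_mw, List.length_append, Finset.sum_range_add]
  have hA : (∑ k ∈ Finset.range u.length, if (u ++ v)[k]? = some i then
        ((List.drop (k+1) (u ++ v)).map (fun a => q i a)).prod • (mw ((u ++ v).eraseIdx k) : TV K N)
        else 0)
      = rdiff K q i (mw u) * Sop q i (mw v) := by
    rw [rdiff_mw, Sop_mw, Finset.sum_mul]
    refine Finset.sum_congr rfl fun k hk => ?_
    rw [Finset.mem_range] at hk
    rw [List.getElem?_append_left hk]
    split
    · rw [List.drop_append_of_le_length (by omega), List.eraseIdx_append_of_lt_length hk,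
        List.map_append, List.prod_append, smul_mul_smul_comm, mw_mul]
    · rw [zero_mul]
  have hB : (∑ k ∈ Finset.range v.length, if (u ++ v)[u.length + k]? = some i then
        ((List.drop (u.length + k + 1) (u ++ v)).map (fun a => q i a)).prod •
          (mw ((u ++ v).eraseIdx (u.length + k)) : TV K N) else 0)
      = mw u * rdiff K q i (mw v) := by
    rw [rdiff_mw, Finset.mul_sum]
    refine Finset.sum_congr rfl fun k hk => ?_
    rw [Finset.mem_range] at hk
    rw [List.getElem?_append_right (by omega), Nat.add_sub_cancel_left]
    split
    · rw [show u.length + k + 1 = u.length + (k + 1) by omega, List.drop_append,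
        List.eraseIdx_append_of_length_le (by omega), Nat.add_sub_cancel_left,
        mul_smul_comm, mw_mul, List.drop_eq_nil_of_le (by omega), List.nil_append,
        Nat.add_sub_cancel_left]
    · rw [mul_zero]
  rw [hA, hB, add_comm]

lemma rdiff_mul (i : Fin N) (a b : TV K N) :
    rdiff K q i (a * b) = a * rdiff K q i b + rdiff K q i a * Sop q i b := by
  induction a using MonoidAlgebra.induction_linear with
  | zero => simp
  | add f g hf hg =>
    simp only [add_mul, map_add, hf, hg]
    abel
  | single w c =>
    induction b using MonoidAlgebra.induction_linear with
    | zero => simp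
    | add f g hf hg =>
      simp only [mul_add, map_add, hf, hg]
      abel
    | single w' c' =>
      rw [single_eq_smul_mw, single_eq_smul_mw (w := w')]
      simp only [smul_mul_smul_comm, map_smul, mw_mul, rdiff_mw_append, smul_add,
        mul_smul_comm, smul_mul_assoc, smul_smul]

lemma swapList_cons (u v : List (Fin N)) (a b : Fin N) :
    swapList (u ++ a :: b :: v) (u.length + 1) = u ++ b :: a :: v := by
  have h1 : (u ++ a :: b :: v)[u.length + 1 - 1]? = some a := by
    simp only [Nat.add_sub_cancel]
    rw [List.getElem?_append_right (le_refl _)]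
    simp
  have h2 : (u ++ a :: b :: v)[u.length + 1]? = some b := by
    rw [List.getElem?_append_right (by omega)]
    simp
  rw [swapList, h1, h2]
  simp only [Nat.add_sub_cancel]
  rw [List.set_append_right _ _ (by omega), List.set_append_right _ _ (by omega)]
  simp

lemma decomp2 {l : List (Fin N)} {k : ℕ} (h1 : 1 ≤ k) (h2 : k < l.length) :
    ∃ u a b v, l = u ++ a :: b :: v ∧ u.length + 1 = k := by
  have hk1 : k - 1 < l.length := by omega
  refine ⟨l.take (k-1), l[k-1], l[k], l.drop (k+1), ?_, by simp [List.length_take]; omega⟩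
  conv_lhs => rw [← List.take_append_drop (k-1) l, List.drop_eq_getElem_cons hk1]
  congr 2
  rw [show k - 1 + 1 = k by omega, List.drop_eq_getElem_cons h2]

lemma Sop_sig_comm (i : Fin N) (k : ℕ) (x : TV K N) :
    Sop q i (sigOp K q k x) = sigOp K q k (Sop q i x) := by
  induction x using MonoidAlgebra.induction_linear with
  | zero => simp
  | add f g hf hg => rw [map_add, map_add, hf, hg, map_add, map_add]
  | single w c =>
    rw [single_eq_smul_mw, map_smul, map_smul, map_smul, map_smul]
    congr 1
    set l := FreeMonoid.toList w with hl
    by_cases h : 1 ≤ k ∧ k < l.length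
    · obtain ⟨u, a, b, v, hlu, hk⟩ := decomp2 h.1 h.2
      rw [hlu, ← hk, sig_cons, map_smul, Sop_mw, Sop_mw, map_smul, sig_cons, smul_smul,
        smul_smul]
      congr 1
      simp only [List.map_append, List.prod_append, List.map_cons, List.prod_cons]
      ring
    · rw [sigOp_mw, if_neg h, Sop_mw, map_smul, sigOp_mw, if_neg h]

lemma wordOp_cons (k : ℕ) (l : List ℕ) (x : TV K N) :
    wordOp K q (k :: l) x = sigOp K q k (wordOp K q l x) := by
  rw [wordOp, wordOp, List.map_cons, List.prod_cons]
  simp [Module.End.mul_apply]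

lemma Sop_wordOp_comm (i : Fin N) (l : List ℕ) (x : TV K N) :
    Sop q i (wordOp K q l x) = wordOp K q l (Sop q i x) := by
  induction l generalizing x with
  | nil => simp [wordOp]
  | cons k l ih => rw [wordOp_cons, wordOp_cons, Sop_sig_comm, ih]

lemma Sop_TOp_comm (i : Fin N) (n : ℕ) (x : TV K N) :
    Sop q i (TOp K q n x) = TOp K q n (Sop q i x) := by
  rw [TOp]
  simp only [LinearMap.sum_apply, map_sum]
  exact Finset.sum_congr rfl fun j _ => Sop_wordOp_comm q i _ x

lemma Sop_deg {i : Fin N} {n : ℕ} {x : TV K N} (hx : x ∈ deg K N n) :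
    Sop q i x ∈ deg K N n := by
  refine map_mem_supported (fun w hw => ?_) hx
  rw [Sop_mw]
  exact Submodule.smul_mem _ _ (mw_mem_deg hw)

lemma rdiff_deg {i : Fin N} {n : ℕ} {x : TV K N} (hx : x ∈ deg K N n) :
    rdiff K q i x ∈ deg K N (n - 1) := by
  refine map_mem_supported (fun w hw => ?_) hx
  rw [rdiff_mw]
  refine Submodule.sum_mem _ fun k hk => ?_
  rw [Finset.mem_range] at hk
  split
  · refine Submodule.smul_mem _ _ (mw_mem_deg ?_)
    rw [List.length_eraseIdx]
    simp only [hk, if_pos]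
    rw [hw]
  · exact Submodule.zero_mem _

lemma mul_deg {p r : ℕ} {a b : TV K N} (ha : a ∈ deg K N p) (hb : b ∈ deg K N r) :
    a * b ∈ deg K N (p + r) := by
  rw [mem_deg_iff] at ha hb ⊢
  intro w hw
  classical
  have := MonoidAlgebra.support_coeff_mul_subset a b hw
  rw [Finset.mem_mul] at this
  obtain ⟨x, hx, y, hy, hxy⟩ := this
  subst hxy
  rw [FreeMonoid.toList_mul, List.length_append, ha x hx, hb y hy]

lemma rdiff_const {i : Fin N} {n : ℕ} {c : TV K N} (hc : c ∈ ConR K q n) :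
    rdiff K q i c = 0 := by
  obtain ⟨hdeg, hker⟩ := hc
  have h1 : rdiff K q i c = (epsOp i ∘ₗ TOp K q n) c := by
    refine eq_on_supported (fun w hw => ?_) hdeg
    rw [LinearMap.comp_apply]
    exact rdiff_eq_eps q i n (FreeMonoid.toList w) hw
  rw [h1, LinearMap.comp_apply, LinearMap.mem_ker.mp hker, map_zero]

lemma Sop_const {i : Fin N} {n : ℕ} {c : TV K N} (hc : c ∈ ConR K q n) :
    Sop q i c ∈ ConR K q n := by
  obtain ⟨hdeg, hker⟩ := hc
  refine ⟨Sop_deg q hdeg, ?_⟩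
  rw [SetLike.mem_coe, LinearMap.mem_ker] at hker ⊢
  rw [← Sop_TOp_comm, hker, map_zero]

noncomputable def Jn (n : ℕ) : Submodule K (TV K N) :=
  Submodule.span K {y | ∃ u v : List (Fin N), ∃ c ∈ ConR K q n, y = mw u * c * mw v}

noncomputable def Jle (m : ℕ) : Submodule K (TV K N) :=
  ⨆ n ∈ Finset.Icc 2 m, Jn q n

lemma absorb {n : ℕ} {c : TV K N} (hc : c ∈ ConR K q n) (a b : TV K N) :
    a * c * b ∈ Jn q n := by
  induction a using MonoidAlgebra.induction_linear with
  | zero => rw [zero_mul, zero_mul]; exact zero_mem _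
  | add f g hf hg => rw [add_mul, add_mul]; exact add_mem hf hg
  | single w e =>
    induction b using MonoidAlgebra.induction_linear with
    | zero => rw [mul_zero]; exact zero_mem _
    | add f g hf hg => rw [mul_add]; exact add_mem hf hg
    | single w' e' =>
      rw [single_eq_smul_mw, single_eq_smul_mw (w := w'), smul_mul_assoc, smul_mul_assoc,
        mul_smul_comm]
      refine Submodule.smul_mem _ _ (Submodule.smul_mem _ _ (Submodule.subset_span ?_))
      exact ⟨_, _, c, hc, rfl⟩

lemma Jle_le_idealGen (m : ℕ) :
    Jle q m ≤ idealGen K (ConRle K q m : Set (TV K N)) := by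
  refine iSup₂_le fun n hn => Submodule.span_le.mpr fun y hy => ?_
  obtain ⟨u, v, c, hc, rfl⟩ := hy
  refine Submodule.subset_span ⟨mw u, mw v, c, ?_, rfl⟩
  exact (le_iSup₂ (f := fun n (_ : n ∈ Finset.Icc 2 m) => ConR K q n) n hn) hc

lemma idealGen_le_Jle (m : ℕ) :
    idealGen K (ConRle K q m : Set (TV K N)) ≤ Jle q m := by
  refine Submodule.span_le.mpr fun y hy => ?_
  obtain ⟨a, b, x, hx, rfl⟩ := hy
  have hL : ConRle K q m ≤ (Jle q m).comap
      ((LinearMap.mulRight K b).comp (LinearMap.mulLeft K a)) := by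
    refine iSup₂_le fun n hn => fun c hc => ?_
    refine Submodule.mem_comap.mpr ?_
    have : (LinearMap.mulRight K b).comp (LinearMap.mulLeft K a) c = a * c * b := rfl
    rw [this]
    exact (le_iSup₂ (f := fun n (_ : n ∈ Finset.Icc 2 m) => Jn q n) n hn) (absorb q hc a b)
  exact hL hx

lemma rdiff_mem_Jle {i : Fin N} {m : ℕ} {x : TV K N} (hx : x ∈ Jle q m) :
    rdiff K q i x ∈ Jle q m := by
  have hL : Jle q m ≤ (Jle q m).comap (rdiff K q i) := by
    refine iSup₂_le fun n hn => Submodule.span_le.mpr fun y hy => ?_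
    obtain ⟨u, v, c, hc, rfl⟩ := hy
    refine Submodule.mem_comap.mpr ?_
    have hJ : n ∈ Finset.Icc 2 m := hn
    have key : rdiff K q i (mw u * c * mw v)
        = mw u * c * rdiff K q i (mw v) + rdiff K q i (mw u) * Sop q i c * Sop q i (mw v) := by
      rw [rdiff_mul, rdiff_mul, rdiff_const q hc, mul_zero, zero_add]
    rw [key]
    refine Submodule.add_mem _ ?_ ?_
    · exact (le_iSup₂ (f := fun n (_ : n ∈ Finset.Icc 2 m) => Jn q n) n hn)
        (absorb q hc (mw u) _)
    · exact (le_iSup₂ (f := fun n (_ : n ∈ Finset.Icc 2 m) => Jn q n) n hn)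
        (absorb q (Sop_const q hc) _ _)
  exact hL hx

noncomputable def Pdeg (d : ℕ) : TV K N →ₗ[K] TV K N :=
  (MonoidAlgebra.coeffLinearEquiv K).symm.toLinearMap ∘ₗ (Finsupp.lsum K fun w =>
    if (FreeMonoid.toList w).length = d then
      (Finsupp.lsingle w : K →ₗ[K] FreeMonoid (Fin N) →₀ K) else 0)
    ∘ₗ (MonoidAlgebra.coeffLinearEquiv K).toLinearMap

lemma Pdeg_mw (d : ℕ) (l : List (Fin N)) :
    Pdeg d (mw l : TV K N) = if l.length = d then mw l else 0 := by
  rw [Pdeg, wrap_mw]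
  split_ifs with h h' h''
  · simp [toList_ofList, mw]
  · exact absurd h h'
  · exact absurd h'' h
  · simp [toList_ofList, mw]

lemma Pdeg_of_deg_eq {d : ℕ} {x : TV K N} (hx : x ∈ deg K N d) : Pdeg d x = x := by
  have : Pdeg d x = LinearMap.id (R := K) x := by
    refine eq_on_supported (fun w hw => ?_) hx
    simp only [Set.mem_setOf_eq] at hw
    rw [Pdeg_mw, if_pos hw, LinearMap.id_apply]
  rwa [LinearMap.id_apply] at this

lemma Pdeg_of_deg_ne {d e : ℕ} {x : TV K N} (hx : x ∈ deg K N e) (h : e ≠ d) :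
    Pdeg d x = 0 := by
  have : Pdeg d x ∈ (⊥ : Submodule K (TV K N)) := by
    refine map_mem_supported (fun w hw => ?_) hx
    rw [Pdeg_mw, if_neg (by rw [hw]; exact h)]
    exact Submodule.zero_mem _
  simpa using this

lemma Pdeg_Jle {m d : ℕ} {x : TV K N} (hx : x ∈ Jle q m) :
    Pdeg d x ∈ Jle q d := by
  have hL : Jle q m ≤ (Jle q d).comap (Pdeg (N := N) d) := by
    refine iSup₂_le fun n hn => Submodule.span_le.mpr fun y hy => ?_
    obtain ⟨u, v, c, hc, rfl⟩ := hy
    refine Submodule.mem_comap.mpr ?_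
    rw [Finset.mem_Icc] at hn
    have hdegy : mw u * c * mw v ∈ deg K N (u.length + n + v.length) :=
      mul_deg (mul_deg (mw_mem_deg rfl) hc.1) (mw_mem_deg rfl)
    by_cases hD : u.length + n + v.length = d
    · rw [hD] at hdegy
      rw [Pdeg_of_deg_eq hdegy]
      have hn' : n ∈ Finset.Icc 2 d := by rw [Finset.mem_Icc]; omega
      exact (le_iSup₂ (f := fun n (_ : n ∈ Finset.Icc 2 d) => Jn q n) n hn')
        (absorb q hc (mw u) (mw v))
    · rw [Pdeg_of_deg_ne hdegy hD]
      exact Submodule.zero_mem _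
  exact hL hx

end Aux

/-- for every `k ≥ 3`, if `x ∈ R^k` then `∂_i^R(x) ∈ R^{k−1}` for every `i`. -/
theorem statement_7 (K : Type*) [Field K] [CharZero K] (N : ℕ) (hN : 1 ≤ N)
    (q : Fin N → Fin N → K) (hq : ∀ i j, q i j ≠ 0) (k : ℕ) (hk : 3 ≤ k)
    (x : TV K N) (hx : x ∈ Rm K q k) :
    ∀ i : Fin N, rdiff K q i x ∈ Rm K q (k - 1) := by
  obtain ⟨hxI, hxd⟩ := hx
  intro i
  have h1 : x ∈ Jle q k := idealGen_le_Jle q k hxI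
  have h2 : rdiff K q i x ∈ Jle q k := rdiff_mem_Jle q h1
  have h3 : rdiff K q i x ∈ deg K N (k - 1) := rdiff_deg q hxd
  have h4 : Pdeg (k - 1) (rdiff K q i x) ∈ Jle q (k - 1) := Pdeg_Jle q h2
  rw [Pdeg_of_deg_eq h3] at h4
  exact ⟨Jle_le_idealGen q (k - 1) h4, h3⟩
end

section
/- For all 1 ≤ i, j ≤ N one has ∂_j^R ∘ d_i^R = q_{ij}^{−1} · d_i^R ∘ ∂_j^R as endomorphisms of T(V). -/
open scoped BigOperators TensorProduct

/-- The bar involution on `T(V)`: the semilinear map fixing every monomial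
`v_{i₁}⋯v_{i_n}` and applying the bar involution of the field to coefficients. -/
noncomputable def barT (K : Type*) [Field K] {N : ℕ} (bar : K ≃+* K) (x : TV K N) :
    TV K N :=
  MonoidAlgebra.ofCoeff (Finsupp.mapRange (⇑bar) (map_zero bar) x.coeff)

section Aux

variable {K : Type*} [Field K] {N : ℕ}

lemma rdiff_single (q : Fin N → Fin N → K) (j : Fin N) (l : List (Fin N)) :
    rdiff K q j (MonoidAlgebra.single (FreeMonoid.ofList l) 1) =
    ∑ k ∈ Finset.range l.length,
      if l[k]? = some j then
        MonoidAlgebra.single (FreeMonoid.ofList (l.eraseIdx k))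
          (((l.drop (k+1)).map (fun b => q j b)).prod)
      else 0 := by
  simp only [rdiff, LinearMap.coe_comp, Function.comp_apply, LinearEquiv.coe_coe,
    MonoidAlgebra.coeffLinearEquiv_apply, MonoidAlgebra.coeff_single, Finsupp.lsum_single,
    LinearMap.sum_apply, map_sum]
  refine Finset.sum_congr (by rw [FreeMonoid.toList_ofList]) (fun k _ => ?_)
  rw [FreeMonoid.toList_ofList]
  split
  · simp [MonoidAlgebra.coeffLinearEquiv_symm_apply, MonoidAlgebra.ofCoeff_single]
  · simp

lemma rdiff_single_concat (q : Fin N → Fin N → K) (j a : Fin N) (l : List (Fin N)) :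
    rdiff K q j (MonoidAlgebra.single (FreeMonoid.ofList (l ++ [a])) 1) =
      (if a = j then MonoidAlgebra.single (FreeMonoid.ofList l) 1 else 0)
      + q j a • (rdiff K q j (MonoidAlgebra.single (FreeMonoid.ofList l) 1) *
          MonoidAlgebra.single (FreeMonoid.of a) 1) := by
  rw [rdiff_single, rdiff_single, List.length_append, List.length_singleton,
    Finset.sum_range_succ, Finset.sum_mul, Finset.smul_sum, add_comm]
  congr 1
  · -- last term
    rw [List.getElem?_concat_length, List.eraseIdx_append_of_length_le le_rfl]
    have h2 : List.drop (l.length + 1) (l ++ [a]) = [] := by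
      apply List.drop_eq_nil_of_le; simp
    rw [h2]
    by_cases h : a = j <;> simp [h]
  · -- the sum
    refine Finset.sum_congr rfl (fun k hk => ?_)
    have hk' : k < l.length := Finset.mem_range.mp hk
    rw [List.getElem?_append_left hk', List.eraseIdx_append_of_lt_length hk',
      List.drop_append_of_le_length (by omega)]
    split
    · rw [List.map_append, List.prod_append, List.map_singleton, List.prod_singleton,
        MonoidAlgebra.single_mul_single, MonoidAlgebra.smul_single',
        ← FreeMonoid.ofList_singleton, ← FreeMonoid.ofList_append]
      congr 1
      rw [mul_one]
      ring
    · simp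

lemma linearMap_mul_single (F : TV K N →ₗ[K] TV K N) (b : Fin N) (s : K)
    (P : Prop) [Decidable P]
    (h : ∀ l : List (Fin N),
      F (MonoidAlgebra.single (FreeMonoid.ofList (l ++ [b])) 1) =
        (if P then MonoidAlgebra.single (FreeMonoid.ofList l) 1 else 0)
        + s • (F (MonoidAlgebra.single (FreeMonoid.ofList l) 1) *
            MonoidAlgebra.single (FreeMonoid.of b) 1))
    (x : TV K N) :
    F (x * MonoidAlgebra.single (FreeMonoid.of b) 1) =
      (if P then x else 0)
      + s • (F x * MonoidAlgebra.single (FreeMonoid.of b) 1) := by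
  induction x using MonoidAlgebra.induction_linear with
  | zero => simp
  | add f g hf hg =>
      rw [add_mul, map_add, hf, hg, map_add, add_mul, smul_add]
      split <;> abel
  | single w c =>
      have hw : (MonoidAlgebra.single w c : TV K N) =
          c • MonoidAlgebra.single (FreeMonoid.ofList (FreeMonoid.toList w)) 1 := by
        rw [MonoidAlgebra.smul_single', mul_one]
        rfl
      rw [hw, smul_mul_assoc, map_smul, map_smul]
      have h1 : MonoidAlgebra.single (FreeMonoid.ofList (FreeMonoid.toList w)) (1:K) *
          MonoidAlgebra.single (FreeMonoid.of b) 1 =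
          MonoidAlgebra.single (FreeMonoid.ofList (FreeMonoid.toList w ++ [b])) 1 := by
        rw [MonoidAlgebra.single_mul_single, FreeMonoid.ofList_append,
          FreeMonoid.ofList_singleton, mul_one]
      rw [h1, h]
      rw [smul_add, smul_mul_assoc]
      congr 1
      · split
        · rw [FreeMonoid.ofList_toList, MonoidAlgebra.smul_single', mul_one]
        · rw [smul_zero]
      · rw [smul_comm]

lemma rdiff_mul_single (q : Fin N → Fin N → K) (j a : Fin N) (x : TV K N) :
    rdiff K q j (x * MonoidAlgebra.single (FreeMonoid.of a) 1) =
      (if a = j then x else 0)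
      + q j a • (rdiff K q j x * MonoidAlgebra.single (FreeMonoid.of a) 1) :=
  linearMap_mul_single (rdiff K q j) a (q j a) (a = j)
    (fun l => rdiff_single_concat q j a l) x

lemma barT_add (bar : K ≃+* K) (x y : TV K N) :
    barT K bar (x + y) = barT K bar x + barT K bar y := by
  ext w
  simp [barT, Finsupp.mapRange_apply, MonoidAlgebra.coeff_add, map_add]

lemma barT_smul (bar : K ≃+* K) (c : K) (x : TV K N) :
    barT K bar (c • x) = bar c • barT K bar x := by
  ext w
  simp [barT, Finsupp.mapRange_apply, MonoidAlgebra.coeff_smul, map_mul]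

lemma barT_single (bar : K ≃+* K) (w : FreeMonoid (Fin N)) (c : K) :
    barT K bar (MonoidAlgebra.single w c) = MonoidAlgebra.single w (bar c) := by
  rw [barT, MonoidAlgebra.coeff_single, Finsupp.mapRange_single, MonoidAlgebra.ofCoeff_single]

lemma barT_mul_single (bar : K ≃+* K) (a : Fin N) (x : TV K N) :
    barT K bar (x * MonoidAlgebra.single (FreeMonoid.of a) 1) =
      barT K bar x * MonoidAlgebra.single (FreeMonoid.of a) 1 := by
  induction x using MonoidAlgebra.induction_linear with
  | zero => simp [barT]
  | add f g hf hg => rw [add_mul, barT_add, hf, hg, barT_add, add_mul]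
  | single w c =>
      rw [MonoidAlgebra.single_mul_single, barT_single, barT_single,
        MonoidAlgebra.single_mul_single, mul_one, mul_one]

end Aux

lemma barT_zero {K : Type*} [Field K] {N : ℕ} (bar : K ≃+* K) : barT K bar (0 : TV K N) = 0 := by
  simp [barT]

/-- with `K = 𝕂(q^{1/2})` (abstracted as a field `K` with an element `t`
playing the role of `q^{1/2}` and a bar involution with `bar t = t⁻¹`), with a symmetric
braiding matrix `q_{ij} = t^{a_{ij}}`, `a_{ij} = a_{ji} ∈ ℤ`, and `d_i^R` the `K`-linear
endomorphism of `T(V)` given on monomials by `d_i^R(v_{i₁}⋯v_{i_n}) = bar(∂_i^R(v_{i₁}⋯v_{i_n}))`,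
one has `∂_j^R ∘ d_i^R = q_{ij}⁻¹ · d_i^R ∘ ∂_j^R` for all `i, j`. -/
theorem statement_16 (K : Type*) [Field K] [CharZero K] (N : ℕ) (hN : 1 ≤ N)
    (t : K) (ht : t ≠ 0)
    (bar : K ≃+* K) (hbar_inv : ∀ c : K, bar (bar c) = c) (hbar_t : bar t = t⁻¹)
    (a : Fin N → Fin N → ℤ) (ha : ∀ i j, a i j = a j i)
    (q : Fin N → Fin N → K) (hq : ∀ i j, q i j = t ^ a i j)
    (i j : Fin N)
    (d : TV K N →ₗ[K] TV K N)
    (hd : ∀ w : FreeMonoid (Fin N),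
      d (MonoidAlgebra.single w (1 : K)) =
        barT K bar (rdiff K q i (MonoidAlgebra.single w (1 : K)))) :
    ∀ x : TV K N, rdiff K q j (d x) = (q i j)⁻¹ • d (rdiff K q j x) := by
  have hq0 : ∀ b c, q b c ≠ 0 := fun b c => by rw [hq]; exact zpow_ne_zero _ ht
  have hsym : ∀ b c, q b c = q c b := fun b c => by rw [hq, hq, ha]
  have hbarq : ∀ b c, bar (q b c) = (q b c)⁻¹ := fun b c => by
    rw [hq, map_zpow₀, hbar_t, inv_zpow]
  have dconcat : ∀ (b : Fin N) (l : List (Fin N)),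
      d (MonoidAlgebra.single (FreeMonoid.ofList (l ++ [b])) 1) =
        (if b = i then MonoidAlgebra.single (FreeMonoid.ofList l) 1 else 0)
        + (q i b)⁻¹ • (d (MonoidAlgebra.single (FreeMonoid.ofList l) 1) *
            MonoidAlgebra.single (FreeMonoid.of b) 1) := by
    intro b l
    rw [hd, rdiff_single_concat, barT_add, barT_smul, barT_mul_single, hbarq,
      apply_ite (barT K bar), barT_single, map_one, barT_zero, ← hd]
  have dmul : ∀ (b : Fin N) (x : TV K N),
      d (x * MonoidAlgebra.single (FreeMonoid.of b) 1) =
        (if b = i then x else 0)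
        + (q i b)⁻¹ • (d x * MonoidAlgebra.single (FreeMonoid.of b) 1) :=
    fun b x => linearMap_mul_single d b ((q i b)⁻¹) (b = i) (dconcat b) x
  have key : ∀ l : List (Fin N),
      rdiff K q j (d (MonoidAlgebra.single (FreeMonoid.ofList l) 1)) =
      (q i j)⁻¹ • d (rdiff K q j (MonoidAlgebra.single (FreeMonoid.ofList l) 1)) := by
    intro l
    induction l using List.reverseRecOn with
    | nil =>
        have h0 : ∀ m : Fin N,
            rdiff K q m (MonoidAlgebra.single (FreeMonoid.ofList ([] : List (Fin N))) (1:K)) = 0 := by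
          intro m; rw [rdiff_single]; simp
        rw [h0, hd, h0, barT_zero, map_zero, map_zero, smul_zero]
    | append_singleton l b IH =>
        have hsplit : MonoidAlgebra.single (FreeMonoid.ofList (l ++ [b])) (1:K) =
            MonoidAlgebra.single (FreeMonoid.ofList l) 1 *
              MonoidAlgebra.single (FreeMonoid.of b) 1 := by
          rw [MonoidAlgebra.single_mul_single, mul_one, FreeMonoid.ofList_append,
            FreeMonoid.ofList_singleton]
        rw [hsplit, dmul, rdiff_mul_single, map_add, map_smul, map_add, map_smul,
          rdiff_mul_single, dmul, IH]
        set X := rdiff K q j (MonoidAlgebra.single (FreeMonoid.ofList l) (1:K)) with hX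
        set Y := d (MonoidAlgebra.single (FreeMonoid.ofList l) (1:K)) with hY
        have hite : rdiff K q j (if b = i then MonoidAlgebra.single (FreeMonoid.ofList l) (1:K) else 0)
            = (if b = i then X else 0) := by
          split <;> [rfl; exact map_zero _]
        have hite2 : d (if b = j then MonoidAlgebra.single (FreeMonoid.ofList l) (1:K) else 0)
            = (if b = j then Y else 0) := by
          split <;> [rfl; exact map_zero _]
        rw [hite, hite2, smul_mul_assoc]
        by_cases hbi : b = i <;> by_cases hbj : b = j <;>
          simp only [hbi, hbj, ite_true, ite_false, smul_zero, add_zero,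
            zero_add, smul_add, smul_smul]
        · have hij : i = j := hbi.symm.trans hbj
          subst hij
          rw [if_pos rfl, inv_mul_cancel₀ (hq0 i i), one_smul]
          abel
        · rw [hbi] at hbj
          rw [if_neg hbj]
          simp only [smul_zero, zero_add, add_zero]
          have e1 : ((q i j)⁻¹ * q j i : K) = 1 := by
            rw [hsym j i, inv_mul_cancel₀ (hq0 i j)]
          have e2 : ((q i i)⁻¹ * (q j i * (q i j)⁻¹) : K)
              = (q i j)⁻¹ * (q j i * (q i i)⁻¹) := by ring
          rw [e2, e1, one_smul]
        · rw [hbj] at hbi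
          rw [if_neg hbi]
          simp only [smul_zero, zero_add, add_zero]
        · congr 1
          ring
  intro x
  induction x using MonoidAlgebra.induction_linear with
  | zero => simp
  | add f g hf hg => rw [map_add, map_add, hf, hg, map_add, map_add, smul_add]
  | single w c =>
      have hw : (MonoidAlgebra.single w c : TV K N) =
          c • MonoidAlgebra.single (FreeMonoid.ofList (FreeMonoid.toList w)) 1 := by
        rw [MonoidAlgebra.smul_single', mul_one, FreeMonoid.ofList_toList]
      rw [hw, map_smul, map_smul, map_smul, map_smul, key, smul_comm]
end
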